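/- Let κ be a strictly positive definite kernel on a set Z and let S = {z_1,…,z_N} be a finite nonempty set of pairwise-distinct points of Z. For every point z̃ ∈ Z, the GP posterior variance Var(z̃ ; S) = κ(z̃,z̃) − κ(z̃,Z) K⁻¹ κ(z̃,Z)ᵀ equals 0 if and only if z̃ ∈ S (i.e., z̃ = z_j for some j ∈ {1,…,N}). -/

import Mathlib

open Matrix
open scoped Classical

/-!
If `z̃ = z_j`, the vector `k` is the `j`-th column of `K`, so `K⁻¹ kᵀ = e_j` and
`k K⁻¹ kᵀ = κ(z̃, z̃)`. If `z̃ ∉ S`, the Gram matrix of `S ∪ {z̃}` is positive definite and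
`Var(z̃ ; S)` is its Schur complement with respect to `K`, hence positive.
-/

/-- A strictly positive definite kernel: every Gram matrix built from pairwise-distinct
points is positive definite. -/
def IsStrictlyPDKernel {Z : Type*} (κ : Z → Z → ℝ) : Prop :=
  ∀ (n : ℕ) (z : Fin n → Z), Function.Injective z →
    (Matrix.of fun i j => κ (z i) (z j)).PosDef

/-- GP posterior variance at a query point `zq`, given the (pairwise-distinct) data points
in the finite set `S`: `κ(z̃,z̃) − k K⁻¹ kᵀ` with `K` the Gram matrix of `S` and `k` the
vector of kernel evaluations between `zq` and the points of `S`. -/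
noncomputable def postVar {Z : Type*} (κ : Z → Z → ℝ) (S : Finset Z) (zq : Z) : ℝ :=
  κ zq zq -
    (fun i : S => κ zq (i : Z)) ⬝ᵥ
      ((Matrix.of fun i j : S => κ (i : Z) (j : Z))⁻¹ *ᵥ fun i : S => κ zq (i : Z))

namespace Matrix.PosDef

variable {m n 𝕜 : Type*} [Fintype m] [Fintype n] [DecidableEq m]
  [Field 𝕜] [PartialOrder 𝕜] [StarRing 𝕜]

theorem schur_complement_of_fromBlocks₁₁ {A : Matrix m m 𝕜} {B : Matrix m n 𝕜}
    {D : Matrix n n 𝕜} (h : (fromBlocks A B Bᴴ D).PosDef) : (D - Bᴴ * A⁻¹ * B).PosDef := by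
  have hA : A.PosDef := by
    convert h.submatrix Sum.inl_injective
    ext; simp
  have := hA.isUnit.invertible
  refine of_dotProduct_mulVec_pos ((IsHermitian.fromBlocks₁₁ B D hA.1).mp h.1) fun y hy => ?_
  have hxy : -((A⁻¹ * B) *ᵥ y) ⊕ᵥ y ≠ 0 := fun h0 =>
    hy (by simpa using congrArg (· ∘ Sum.inr) h0)
  have := h.dotProduct_mulVec_pos hxy
  rwa [dotProduct_mulVec, schur_complement_eq₁₁ B D _ _ hA.1, neg_add_cancel, dotProduct_zero,
    zero_add, ← dotProduct_mulVec] at this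

end Matrix.PosDef

namespace IsStrictlyPDKernel

variable {Z : Type*} {κ : Z → Z → ℝ}

theorem posDef_gram (hκ : IsStrictlyPDKernel κ) {ι : Type*} [Fintype ι] {z : ι → Z}
    (hz : Function.Injective z) : (Matrix.of fun i j => κ (z i) (z j)).PosDef := by
  let e := Fintype.equivFin ι
  convert (hκ _ (z ∘ e.symm) (hz.comp e.symm.injective)).submatrix e.injective
  ext; simp

theorem symm (hκ : IsStrictlyPDKernel κ) (x y : Z) : κ x y = κ y x := by
  have := (hκ.posDef_gram (z := ((↑) : ({x, y} : Finset Z) → Z)) Subtype.val_injective).1.apply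
    ⟨x, by simp⟩ ⟨y, by simp⟩
  simpa using this.symm

end IsStrictlyPDKernel

section PosteriorVariance

variable {Z : Type*} {κ : Z → Z → ℝ} {S : Finset Z} {zq : Z}

theorem postVar_eq_zero_of_mem (hκ : IsStrictlyPDKernel κ) (h : zq ∈ S) :
    postVar κ S zq = 0 := by
  set K : Matrix S S ℝ := Matrix.of fun i j : S => κ i j
  have hK : IsUnit K.det :=
    (isUnit_iff_isUnit_det K).mp (hκ.posDef_gram Subtype.val_injective).isUnit
  have hk : (fun i : S => κ zq i) = K *ᵥ Pi.single ⟨zq, h⟩ 1 := by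
    ext i; simp [K, hκ.symm zq]
  rw [postVar, hk, mulVec_mulVec, nonsing_inv_mul K hK, one_mulVec, dotProduct_single, mul_one]
  simp [K]

theorem postVar_pos_of_not_mem (hκ : IsStrictlyPDKernel κ) (h : zq ∉ S) :
    0 < postVar κ S zq := by
  set k : S → ℝ := fun i => κ zq i
  set w : S ⊕ Unit → Z := Sum.elim (↑) fun _ => zq
  have hw : Function.Injective w :=
    Subtype.val_injective.sumElim (Function.injective_of_subsingleton _)
      fun i _ hi => h (hi ▸ i.2)
  have hgram : (of fun p q => κ (w p) (w q)) = fromBlocks (of fun i j : S => κ i j)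
      (replicateCol Unit k) (replicateCol Unit k)ᴴ (of fun _ _ => κ zq zq) := by
    ext (i | _) (j | _) <;> simp [w, k, hκ.symm zq]
  have hschur := (hgram ▸ hκ.posDef_gram hw).schur_complement_of_fromBlocks₁₁.diag_pos (i := ())
  rwa [Matrix.sub_apply, Matrix.mul_assoc, conjTranspose_replicateCol, ← replicateCol_mulVec,
    replicateRow_mul_replicateCol_apply, of_apply, star_trivial] at hschur

end PosteriorVariance

theorem statement6_general {Z : Type*} (κ : Z → Z → ℝ) (hκ : IsStrictlyPDKernel κ)
    (S : Finset Z) (zq : Z) :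
    postVar κ S zq = 0 ↔ zq ∈ S :=
  ⟨fun h0 => by_contra fun h => (postVar_pos_of_not_mem hκ h).ne' h0, postVar_eq_zero_of_mem hκ⟩

/-- For a strictly positive definite kernel and a finite nonempty set `S`
of pairwise-distinct points, the GP posterior variance at a point `z̃` vanishes if and
only if `z̃ ∈ S`. -/
theorem statement6 {Z : Type*} (κ : Z → Z → ℝ) (hκ : IsStrictlyPDKernel κ)
    (S : Finset Z) (hS : S.Nonempty) (zq : Z) :
    postVar κ S zq = 0 ↔ zq ∈ S :=
  statement6_general κ hκ S zq
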